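/- arXiv:1210.7938 — 10 statements merged into one kernel-verified Lean document; each statement's English description precedes it below -/
import Mathlib

section
/- For every integer n ≥ 1, the polynomial Q_{n-1}(x) = ∑_{j=0}^{n-1} binom(n+j-1, j) x^j satisfies the identity n·Q_{n-1}(x) + (x-1)·Q'_{n-1}(x) = ((2n-1)!/((n-1)!·(n-1)!))·x^{n-1} for all x (as an identity of polynomials). -/
open Polynomial

theorem aux (m : ℕ) :
    ((m + 1 : ℕ) : Polynomial ℚ) * (∑ j ∈ Finset.range (m+1), C ((Nat.choose (m+j) j : ℚ)) * X ^ j)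
      + (X - C 1) * derivative (∑ j ∈ Finset.range (m+1), C ((Nat.choose (m+j) j : ℚ)) * X ^ j)
      = C (((2*m+1).factorial : ℚ) / ((m.factorial : ℚ) * (m.factorial : ℚ))) * X ^ m := by
  have key : ∀ j : ℕ, ((j+1 : ℕ) : ℚ) * (Nat.choose (m+j+1) (j+1) : ℚ)
      = ((m+1+j : ℕ) : ℚ) * (Nat.choose (m+j) j : ℚ) := by
    intro j
    have h : (m+j+1) * Nat.choose (m+j) j = Nat.choose (m+j+1) (j+1) * (j+1) :=
      Nat.add_one_mul_choose_eq (m+j) j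
    have h2 := congrArg (Nat.cast : ℕ → ℚ) h
    push_cast at h2 ⊢
    linarith
  have hder : derivative (∑ j ∈ Finset.range (m+1), C ((Nat.choose (m+j) j : ℚ)) * X ^ j)
      = ∑ j ∈ Finset.range m, C (((m+1+j : ℕ) : ℚ) * (Nat.choose (m+j) j : ℚ)) * X ^ j := by
    rw [derivative_sum, Finset.sum_range_succ']
    simp only [derivative_C_mul_X_pow]
    have e : ∀ j ∈ Finset.range m,
        C ((Nat.choose (m+(j+1)) (j+1) : ℚ) * ((j+1 : ℕ) : ℚ)) * X ^ (j+1-1)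
        = C (((m+1+j : ℕ) : ℚ) * (Nat.choose (m+j) j : ℚ)) * X ^ j := by
      intro j _
      rw [← key j]
      push_cast
      ring_nf
    rw [Finset.sum_congr rfl e]
    simp
  rw [hder, sub_mul, Finset.mul_sum, Finset.mul_sum, map_one, one_mul]
  have hx : ∀ j ∈ Finset.range m,
      X * (C (((m+1+j : ℕ) : ℚ) * (Nat.choose (m+j) j : ℚ)) * X ^ j)
      = C (((j+1 : ℕ) : ℚ) * (Nat.choose (m+j+1) (j+1) : ℚ)) * X ^ (j+1) := by
    intro j _
    rw [key]; ring
  rw [Finset.sum_congr rfl hx]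
  have hshift : ∑ j ∈ Finset.range m, C (((j+1:ℕ):ℚ) * (Nat.choose (m+j+1) (j+1) : ℚ)) * X ^ (j+1)
      = ∑ j ∈ Finset.range (m+1), C ((j:ℚ) * (Nat.choose (m+j) j : ℚ)) * X ^ j := by
    rw [Finset.sum_range_succ']
    push_cast
    simp only [Nat.cast_zero, zero_mul, map_zero, zero_mul, pow_zero, mul_one, add_zero]
    apply Finset.sum_congr rfl
    intro j _
    push_cast
    ring_nf
  rw [hshift, add_sub_assoc', ← Finset.sum_add_distrib]
  have hcomb : ∀ j ∈ Finset.range (m+1),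
      ((m+1:ℕ) : Polynomial ℚ) * (C ((Nat.choose (m+j) j : ℚ)) * X ^ j)
      + C ((j:ℚ) * (Nat.choose (m+j) j : ℚ)) * X ^ j
      = C (((m+1+j:ℕ):ℚ) * (Nat.choose (m+j) j : ℚ)) * X ^ j := by
    intro j _
    rw [← C_eq_natCast, ← mul_assoc, ← C_mul, ← add_mul, ← C_add]
    congr 1
    push_cast
    ring
  rw [Finset.sum_congr rfl hcomb, Finset.sum_range_succ, add_sub_cancel_left]
  congr 1
  have h1 : (Nat.choose (m+m) m : ℚ)
      = ((m+m).factorial : ℚ) / ((m.factorial : ℚ) * (m.factorial : ℚ)) := by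
    rw [Nat.cast_choose ℚ (Nat.le_add_left m m)]
    norm_num
  have h2 : ((2*m+1).factorial : ℚ) = ((2*m+1 : ℕ) : ℚ) * ((m+m).factorial : ℚ) := by
    have e : 2*m+1 = (m+m)+1 := by ring
    rw [e, Nat.factorial_succ]
    push_cast
    ring
  congr 1
  rw [h1, h2]
  push_cast
  ring

/-- For every integer `n ≥ 1`, the polynomial
`Q_{n-1}(x) = ∑_{j=0}^{n-1} binom(n+j-1, j) x^j` satisfies
`n·Q_{n-1}(x) + (x-1)·Q'_{n-1}(x) = ((2n-1)!/((n-1)!(n-1)!))·x^{n-1}`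
as an identity of polynomials. -/
theorem stmt_0 (n : ℕ) (hn : 1 ≤ n) (Q : Polynomial ℚ)
    (hQ : Q = ∑ j ∈ Finset.range n, C ((Nat.choose (n + j - 1) j : ℚ)) * X ^ j) :
    (n : Polynomial ℚ) * Q + (X - C 1) * derivative Q
      = C ((Nat.factorial (2 * n - 1) : ℚ) /
            ((Nat.factorial (n - 1) : ℚ) * (Nat.factorial (n - 1) : ℚ))) * X ^ (n - 1) := by
  obtain ⟨m, rfl⟩ : ∃ m, n = m + 1 := ⟨n - 1, by omega⟩
  have hQ' : Q = ∑ j ∈ Finset.range (m+1), C ((Nat.choose (m+j) j : ℚ)) * X ^ j := by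
    rw [hQ]
    apply Finset.sum_congr rfl
    intro j _
    have e : m + 1 + j - 1 = m + j := by omega
    rw [e]
  rw [hQ', show 2*(m+1)-1 = 2*m+1 from by omega, show m+1-1 = m from by omega]
  exact aux m
end

section
/- For every integer n ≥ 1, every complex zero of the polynomial Q_{n-1}(x) = ∑_{j=0}^{n-1} binom(n+j-1, j) x^j is simple; that is, Q_{n-1} and its derivative Q'_{n-1} have no common complex zero. -/
open Polynomial

/-- For every integer `n ≥ 1`, every complex zero of the polynomial
`Q_{n-1}(x) = ∑_{j=0}^{n-1} binom(n+j-1, j) x^j` is simple; that is,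
`Q_{n-1}` and its derivative have no common complex zero. -/
theorem stmt_1 (n : ℕ) (hn : 1 ≤ n) (Q : Polynomial ℂ)
    (hQ : Q = ∑ j ∈ Finset.range n, C ((Nat.choose (n + j - 1) j : ℂ)) * X ^ j) :
    ∀ α : ℂ, Q.eval α = 0 → (derivative Q).eval α ≠ 0 := by
  -- coefficients of Q
  have hcoeff : ∀ k : ℕ, Q.coeff k =
      if k < n then ((Nat.choose (n + k - 1) k : ℂ)) else 0 := by
    intro k
    rw [hQ, Polynomial.finset_sum_coeff]
    simp only [Polynomial.coeff_C_mul, Polynomial.coeff_X_pow, mul_ite, mul_one, mul_zero]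
    rw [Finset.sum_ite_eq (Finset.range n) k fun j => ((Nat.choose (n + j - 1) j : ℂ))]
    simp [Finset.mem_range]
  set c : ℂ := (((2 * n - 1) * Nat.choose (2 * n - 2) (n - 1) : ℕ) : ℂ) with hc
  have key : (1 - X) * derivative Q = C (n : ℂ) * Q - C c * X ^ (n - 1) := by
    ext k
    have hd : ∀ m : ℕ, (derivative Q).coeff m = Q.coeff (m + 1) * (m + 1) :=
      fun m => Polynomial.coeff_derivative Q m
    have hXd : (X * derivative Q).coeff k = Q.coeff k * k := by
      cases k with
      | zero => simp
      | succ m => rw [Polynomial.coeff_X_mul, hd]; push_cast; ring_nf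
    rw [sub_mul, one_mul, Polynomial.coeff_sub, Polynomial.coeff_sub, hXd, hd,
      Polynomial.coeff_C_mul, Polynomial.coeff_C_mul, Polynomial.coeff_X_pow,
      hcoeff, hcoeff]
    rcases lt_trichotomy (k + 1) n with h | h | h
    · -- k + 1 < n, binomial recurrence
      have hk : k < n := by omega
      have hkn : ¬ (k = n - 1) := by omega
      simp only [if_pos h, if_pos hk, if_neg hkn, mul_zero, mul_ite, mul_one]
      have hb : (k + 1) * Nat.choose (n + (k + 1) - 1) (k + 1)
          = (n + k) * Nat.choose (n + k - 1) k := by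
        set m := n + k - 1 with hm
        rw [show n + (k + 1) - 1 = m + 1 from by omega,
          show n + k = m + 1 from by omega]
        simpa [Nat.succ_eq_add_one, mul_comm] using (Nat.add_one_mul_choose_eq m k).symm
      have hb' : ((k : ℂ) + 1) * (Nat.choose (n + (k + 1) - 1) (k + 1) : ℂ)
          = ((n : ℂ) + k) * (Nat.choose (n + k - 1) k : ℂ) := by
        exact_mod_cast congrArg (Nat.cast : ℕ → ℂ) hb
      linear_combination hb'
    · -- k + 1 = n : boundary term
      have hk : k < n := by omega
      have hkn : k = n - 1 := by omega
      have hno : ¬ (k + 1 < n) := by omega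
      simp only [if_neg hno, if_pos hk, if_pos hkn, zero_mul, mul_one]
      have h1 : n + k - 1 = 2 * n - 2 := by omega
      have h2 : n - 1 = k := by omega
      rw [hc, h1, h2]
      have h3 : ((2 * n - 1 : ℕ) : ℂ) = (n : ℂ) + k := by
        have : 2 * n - 1 = n + k := by omega
        rw [this]; push_cast; ring
      push_cast [h3]
      ring
    · -- k ≥ n : everything vanishes
      have h1 : ¬ (k + 1 < n) := by omega
      have h2 : ¬ (k < n) := by omega
      have h3 : ¬ (k = n - 1) := by omega
      simp [h1, h2, h3]
  intro α hα hα'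
  have hev := congrArg (Polynomial.eval α) key
  simp only [Polynomial.eval_mul, Polynomial.eval_sub, Polynomial.eval_one,
    Polynomial.eval_X, Polynomial.eval_C, Polynomial.eval_pow, hα, hα',
    mul_zero] at hev
  -- hev : 0 = n * 0 - c * α ^ (n-1)
  have hcpos : c ≠ 0 := by
    rw [hc]
    have : 0 < (2 * n - 1) * Nat.choose (2 * n - 2) (n - 1) := by
      apply Nat.mul_pos (by omega) (Nat.choose_pos (by omega))
    exact_mod_cast this.ne'
  have hαpow : α ^ (n - 1) = 0 := by
    have h : c * α ^ (n - 1) = 0 := by linear_combination hev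
    exact (mul_eq_zero.mp h).resolve_left hcpos
  obtain ⟨hα0, -⟩ := pow_eq_zero_iff'.mp hαpow
  have hQ0 : Q.eval 0 = 1 := by
    rw [← Polynomial.coeff_zero_eq_eval_zero, hcoeff]
    simp [hn, Nat.lt_of_lt_of_le Nat.zero_lt_one hn]
  rw [hα0, hQ0] at hα
  exact one_ne_zero hα
end

section
/- Let m ≥ 0 and for each k ∈ ℕ₀ let p^{[k]}(z) and p(z) be complex polynomials of degree ≤ m. Assume that for every R > 0 there exists a constant C_m(R) > 0 such that |p^{[k]}(z) - p(z)| ≤ C_m(R)·2^{-k} for all k ∈ ℕ₀ and all |z| ≤ R. If α is a simple zero of p (i.e., p(α) = 0 and p'(α) ≠ 0), then there exist k₀ ∈ ℕ₀ and a constant ρ > 0 such that for each integer k ≥ k₀ the polynomial p^{[k]} has a zero α^{[k]} with |α^{[k]} - α| ≤ ρ·2^{-k}. -/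
/-!
Near a simple zero `α`, `‖z - α‖ ≤ K ‖p(z)‖`, so on the circle of radius `3 K ε` around `α`
we have `‖p‖ ≥ 3ε`. A perturbation `g` with `‖g - p‖ ≤ ε` then satisfies `‖g‖ ≥ 2ε` on that
circle but `‖g(α)‖ ≤ ε` at its centre, so by the minimum modulus principle `g` vanishes inside.
With `ε = C / 2^k` this places a zero of `p^{[k]}` within `3 K C / 2^k` of `α`.
-/

open Polynomial Filter Metric Asymptotics

theorem HasDerivAt.exists_norm_sub_le_mul_norm_sub {𝕜 F : Type*} [NontriviallyNormedField 𝕜]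
    [NormedAddCommGroup F] [NormedSpace 𝕜 F] {f : 𝕜 → F} {f' : F} {x : 𝕜}
    (hf : HasDerivAt f f' x) (hf' : f' ≠ 0) :
    ∃ K > 0, ∃ r > 0, ∀ z ∈ closedBall x r, ‖z - x‖ ≤ K * ‖f z - f x‖ := by
  have hpair : Tendsto (fun z => (z, x)) (nhds x) (nhds x ×ˢ pure x) :=
    tendsto_id.prodMk tendsto_const_pure
  obtain ⟨K, hK, hbound⟩ :=
    ((HasDerivAtFilter.isTheta_sub hf hf').isBigO_symm.comp_tendsto hpair).exists_pos
  obtain ⟨r, hr, hball⟩ := nhds_basis_closedBall.eventually_iff.1 hbound.bound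
  exact ⟨K, hK, r, hr, hball⟩

theorem DiffContOnCl.exists_mem_ball_eq_zero {f : ℂ → ℂ} {c : ℂ} {r : ℝ}
    (hf : DiffContOnCl ℂ f (ball c r)) (hr : 0 < r)
    (hsphere : ∀ z ∈ sphere c r, ‖f c‖ < ‖f z‖) :
    ∃ z ∈ ball c r, f z = 0 := by
  obtain ⟨w, hw, hmin⟩ := (isCompact_sphere c r).exists_isMinOn
    (NormedSpace.sphere_nonempty.2 hr.le)
    (hf.continuousOn.norm.mono (closure_ball c hr.ne' ▸ sphere_subset_closedBall))
  by_contra! hne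
  have hclosure : ∀ z ∈ closure (ball c r), f z ≠ 0 := by
    rw [closure_ball c hr.ne']
    intro z hz
    rcases (mem_closedBall.1 hz).lt_or_eq with hlt | heq
    · exact hne z (mem_ball.2 hlt)
    · exact norm_pos_iff.1 ((norm_nonneg _).trans_lt (hsphere z (mem_sphere.2 heq)))
  have hfc : 0 < ‖f c‖ := norm_pos_iff.2 (hne c (mem_ball_self hr))
  -- the maximum modulus principle for `1 / f`
  have hcenter : ‖(f c)⁻¹‖ ≤ ‖f w‖⁻¹ :=
    Complex.norm_le_of_forall_mem_frontier_norm_le isBounded_ball (hf.inv hclosure)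
      (fun z hz => by
        rw [frontier_ball c hr.ne'] at hz
        simpa only [Pi.inv_apply, norm_inv] using
          inv_anti₀ (hfc.trans (hsphere w hw)) (hmin hz))
      (subset_closure (mem_ball_self hr))
  rw [norm_inv] at hcenter
  exact (hsphere w hw).not_ge ((inv_le_inv₀ hfc (hfc.trans (hsphere w hw))).1 hcenter)

theorem Differentiable.exists_eq_zero_near_of_norm_sub_le {f g : ℂ → ℂ} {α : ℂ} {K r ε : ℝ}
    (hg : Differentiable ℂ g) (hK : 0 < K) (hε : 0 < ε) (hr : 3 * K * ε ≤ r) (hfα : f α = 0)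
    (hgrowth : ∀ z ∈ closedBall α r, ‖z - α‖ ≤ K * ‖f z‖)
    (hfg : ∀ z ∈ closedBall α r, ‖g z - f z‖ ≤ ε) :
    ∃ z, g z = 0 ∧ ‖z - α‖ ≤ 3 * K * ε := by
  have hgα : ‖g α‖ ≤ ε := by
    simpa [hfα] using hfg α (mem_closedBall_self ((by positivity : (0 : ℝ) ≤ 3 * K * ε).trans hr))
  have hsphere : ∀ z ∈ sphere α (3 * K * ε), ‖g α‖ < ‖g z‖ := by
    intro z hz
    have hzr : z ∈ closedBall α r :=
      sphere_subset_closedBall.trans (closedBall_subset_closedBall hr) hz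
    have hfz : 3 * ε ≤ ‖f z‖ := by
      have := hgrowth z hzr
      rw [← dist_eq_norm, mem_sphere.1 hz, mul_comm 3 K, mul_assoc] at this
      exact le_of_mul_le_mul_left this hK
    have := norm_sub_norm_le (f z) (g z)
    rw [norm_sub_rev] at this
    linarith [hfg z hzr]
  obtain ⟨z, hz, hgz⟩ := hg.diffContOnCl.exists_mem_ball_eq_zero (by positivity) hsphere
  exact ⟨z, hgz, (mem_ball_iff_norm.1 hz).le⟩

theorem stmt_3_general (P : ℕ → Polynomial ℂ) (p : Polynomial ℂ)
    (happrox : ∀ R : ℝ, 0 < R → ∃ C : ℝ, 0 < C ∧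
      ∀ (k : ℕ) (z : ℂ), ‖z‖ ≤ R →
        ‖(P k).eval z - p.eval z‖ ≤ C / 2 ^ k)
    (α : ℂ) (hzero : p.eval α = 0) (hsimple : (derivative p).eval α ≠ 0) :
    ∃ (k₀ : ℕ) (ρ : ℝ), 0 < ρ ∧
      ∀ k : ℕ, k₀ ≤ k → ∃ αk : ℂ, (P k).eval αk = 0 ∧ ‖αk - α‖ ≤ ρ / 2 ^ k := by
  obtain ⟨K, hK, r, hr, hgrowth⟩ := (p.hasDerivAt α).exists_norm_sub_le_mul_norm_sub hsimple
  obtain ⟨C, hC, hPp⟩ := happrox (‖α‖ + r) (by positivity)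
  obtain ⟨k₀, hk₀⟩ := pow_unbounded_of_one_lt (3 * K * C / r) one_lt_two
  refine ⟨k₀, 3 * K * C, by positivity, fun k hk => ?_⟩
  have hsmall : 3 * K * (C / 2 ^ k) ≤ r := by
    rw [← mul_div_assoc, div_le_iff₀ (by positivity), mul_comm r, ← div_le_iff₀ hr]
    exact hk₀.le.trans (pow_le_pow_right₀ one_le_two hk)
  simpa only [mul_div_assoc] using (P k).differentiable.exists_eq_zero_near_of_norm_sub_le hK
    (by positivity) hsmall hzero (by simpa only [hzero, sub_zero] using hgrowth)
    fun z hz => hPp k z (norm_le_of_mem_closedBall hz)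

/-- If the polynomials `p^{[k]}` of degree `≤ m` converge to `p` (degree `≤ m`) at rate
`2^{-k}` uniformly on every ball `|z| ≤ R`, and `α` is a simple zero of `p`, then there
exist `k₀` and `ρ > 0` such that for every `k ≥ k₀` the polynomial `p^{[k]}` has a zero
`α^{[k]}` with `|α^{[k]} - α| ≤ ρ·2^{-k}`. -/
theorem stmt_3 (m : ℕ) (P : ℕ → Polynomial ℂ) (p : Polynomial ℂ)
    (hdegP : ∀ k, (P k).natDegree ≤ m) (hdegp : p.natDegree ≤ m)
    (happrox : ∀ R : ℝ, 0 < R → ∃ C : ℝ, 0 < C ∧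
      ∀ (k : ℕ) (z : ℂ), ‖z‖ ≤ R →
        ‖(P k).eval z - p.eval z‖ ≤ C / 2 ^ k)
    (α : ℂ) (hzero : p.eval α = 0) (hsimple : (derivative p).eval α ≠ 0) :
    ∃ (k₀ : ℕ) (ρ : ℝ), 0 < ρ ∧
      ∀ k : ℕ, k₀ ≤ k → ∃ αk : ℂ, (P k).eval αk = 0 ∧ ‖αk - α‖ ≤ ρ / 2 ^ k :=
  stmt_3_general P p happrox α hzero hsimple
end

section
/- Let a^{[k]}_j, j ∈ ℤ, k ∈ ℕ₀, be complex masks with symbols a^{[k]}(z) = ∑_{j∈ℤ} a^{[k]}_j z^j, and suppose: (i) there is a fixed integer N > 0 with a^{[k]}_j = 0 for all |j| ≥ N and all k; (ii) there is M > 0 with |a^{[k]}(e^{iω})| ≤ M for all k ∈ ℕ₀ and all ω ∈ ℝ, and ∑_{k=0}^{∞} |(1/2)·a^{[k]}(1) - 1| < ∞. Then the infinite product ∏_{k=1}^{∞} (1/2)·a^{[k-1]}(e^{iω·2^{-k}}), i.e., the sequence of partial products P_K(ω) = ∏_{k=1}^{K} (1/2)·a^{[k-1]}(e^{iω·2^{-k}}),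 converges uniformly on every compact subset of ℝ (as functions of ω). -/
/-!
Write the `k`-th factor as `1 + g_k(ω)`. A trigonometric polynomial bounded by `M` on the circle
has all its coefficients bounded by `M` (orthogonality of `e^{imθ}` on `[0, 2π]`), so
`θ ↦ a^{[k]}(e^{iθ})` is Lipschitz with constant `(2N+1)MN`, uniformly in `k`. Hence for
`|ω| ≤ R` we get `|g_k(ω)| ≤ (2N+1)MNR·2^{-k} + |½ a^{[k]}(1) - 1|`, a summable bound, and a
product `∏ (1 + g_k)` of continuous functions with summable uniform bounds converges uniformly
on compact sets.
-/

open Filter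

/-- The symbol of the mask `mask` (supported in `{-N,…,N}`): the Laurent polynomial
`∑_{j=-N}^{N} mask j · z^j`. -/
noncomputable def symbol (N : ℕ) (mask : ℤ → ℂ) (z : ℂ) : ℂ :=
  ∑ j ∈ Finset.Icc (-(N : ℤ)) (N : ℤ), mask j * z ^ j

open Complex
open scoped Real

theorem integral_exp_int_mul_I (n : ℤ) :
    ∫ ω in (0 : ℝ)..2 * π, exp (n * I * ω) = if n = 0 then (2 * π : ℂ) else 0 := by
  split_ifs with hn
  · simp [hn]
  · have hc : (n : ℂ) * I ≠ 0 := mul_ne_zero (Int.cast_ne_zero.mpr hn) I_ne_zero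
    have hperiod : exp (n * I * (2 * π)) = 1 := by
      rw [← exp_int_mul_two_pi_mul_I n]; ring_nf
    simp [integral_exp_mul_complex hc, hperiod]

theorem norm_coeff_le_of_norm_trigPoly_le (S : Finset ℤ) (c : ℤ → ℂ) {M : ℝ}
    (hb : ∀ ω : ℝ, ‖∑ m ∈ S, c m * exp (I * ω) ^ m‖ ≤ M) {j : ℤ} (hj : j ∈ S) :
    ‖c j‖ ≤ M := by
  have hterm (m : ℤ) (ω : ℝ) :
      c m * exp (I * ω) ^ m * exp (-(j * I * ω)) = c m * exp ((m - j : ℤ) * I * ω) := by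
    rw [mul_assoc, ← exp_int_mul, ← exp_add]; push_cast; ring_nf
  have hcoeff : ∫ ω in (0 : ℝ)..2 * π, (∑ m ∈ S, c m * exp (I * ω) ^ m) * exp (-(j * I * ω))
      = 2 * π * c j := by
    simp_rw [Finset.sum_mul, hterm]
    rw [intervalIntegral.integral_finsetSum fun m _ ↦ by
      apply Continuous.intervalIntegrable; fun_prop]
    simp only [intervalIntegral.integral_const_mul, integral_exp_int_mul_I, sub_eq_zero,
      mul_ite, mul_zero]
    rw [Finset.sum_ite_eq' S j, if_pos hj, mul_comm]
  have hnorm : ∀ ω ∈ Set.uIoc 0 (2 * π),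
      ‖(∑ m ∈ S, c m * exp (I * ω) ^ m) * exp (-(j * I * ω))‖ ≤ M := fun ω _ ↦ by
    rw [norm_mul, show -(j * I * ω) = ((-(j * ω) : ℝ) : ℂ) * I by push_cast; ring,
      norm_exp_ofReal_mul_I, mul_one]
    exact hb ω
  have h := intervalIntegral.norm_integral_le_of_norm_le_const hnorm
  rw [hcoeff, norm_mul, norm_mul, Complex.norm_two, norm_real, Real.norm_of_nonneg Real.pi_pos.le,
    sub_zero, abs_of_pos Real.two_pi_pos, mul_comm M] at h
  exact le_of_mul_le_mul_left h Real.two_pi_pos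

theorem norm_symbol_exp_I_mul_sub_symbol_one_le (N : ℕ) (mask : ℤ → ℂ) {M : ℝ}
    (hb : ∀ ω : ℝ, ‖symbol N mask (exp (I * ω))‖ ≤ M) (t : ℝ) :
    ‖symbol N mask (exp (I * t)) - symbol N mask 1‖ ≤ (2 * N + 1) * (M * (N * |t|)) := by
  rw [symbol, symbol, ← Finset.sum_sub_distrib]
  calc _ ≤ ∑ m ∈ Finset.Icc (-(N : ℤ)) N, ‖mask m * exp (I * t) ^ m - mask m * 1 ^ m‖ :=
        norm_sum_le _ _
    _ ≤ ∑ m ∈ Finset.Icc (-(N : ℤ)) N, M * (N * |t|) := Finset.sum_le_sum fun m hm ↦ ?_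
    _ = (2 * N + 1) * (M * (N * |t|)) := by
      rw [Finset.sum_const, Int.card_Icc, nsmul_eq_mul]
      congr 1
      norm_cast
      omega
  have hcoeff : ‖mask m‖ ≤ M := norm_coeff_le_of_norm_trigPoly_le _ mask hb hm
  have hmN : |(m : ℝ)| ≤ N := by
    rw [Finset.mem_Icc] at hm
    exact abs_le.mpr ⟨by exact_mod_cast hm.1, by exact_mod_cast hm.2⟩
  rw [one_zpow, mul_one, ← mul_sub_one, norm_mul, ← exp_int_mul,
    show (m : ℂ) * (I * t) = I * ((m * t : ℝ) : ℂ) by push_cast; ring]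
  refine mul_le_mul hcoeff (Real.norm_exp_I_mul_ofReal_sub_one_le.trans ?_) (norm_nonneg _)
    ((norm_nonneg _).trans hcoeff)
  rw [Real.norm_eq_abs, abs_mul]
  exact mul_le_mul_of_nonneg_right hmN (abs_nonneg t)

theorem continuous_symbol_exp (N : ℕ) (mask : ℤ → ℂ) {f : ℝ → ℂ} (hf : Continuous f) :
    Continuous fun ω ↦ symbol N mask (exp (f ω)) := by
  refine continuous_finsetSum _ fun j _ ↦ continuous_const.mul ?_
  exact (continuous_exp.comp hf).zpow₀ j fun _ ↦ Or.inl (exp_ne_zero _)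

theorem norm_half_symbol_exp_I_mul_sub_one_le (N : ℕ) (mask : ℤ → ℂ) {M : ℝ}
    (hb : ∀ ω : ℝ, ‖symbol N mask (exp (I * ω))‖ ≤ M) (t : ℝ) :
    ‖(1 / 2 : ℂ) * symbol N mask (exp (I * t)) - 1‖
      ≤ (2 * N + 1) * (M * (N * |t|)) + ‖(1 / 2 : ℂ) * symbol N mask 1 - 1‖ := by
  have hsplit : (1 / 2 : ℂ) * symbol N mask (exp (I * t)) - 1
      = (1 / 2 : ℂ) * (symbol N mask (exp (I * t)) - symbol N mask 1)
        + ((1 / 2 : ℂ) * symbol N mask 1 - 1) := by ring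
  rw [hsplit]
  refine (norm_add_le _ _).trans (add_le_add_left ?_ _)
  rw [norm_mul]
  have h := norm_symbol_exp_I_mul_sub_symbol_one_le N mask hb t
  have : ‖(1 / 2 : ℂ)‖ ≤ 1 := by norm_num
  nlinarith [norm_nonneg (symbol N mask (exp (I * t)) - symbol N mask 1)]

theorem abs_mul_two_zpow_neg_succ_le {ω R : ℝ} (hω : |ω| ≤ R) (k : ℕ) :
    |ω * 2 ^ (-(k + 1 : ℤ))| ≤ R * (1 / 2) ^ k := by
  have h2 : (0 : ℝ) < 2 ^ (-(k + 1 : ℤ)) := zpow_pos two_pos _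
  rw [abs_mul, abs_of_pos h2]
  refine mul_le_mul hω ?_ h2.le ((abs_nonneg ω).trans hω)
  rw [one_div, inv_pow, ← zpow_natCast, ← zpow_neg]
  exact zpow_le_zpow_right₀ one_le_two (by omega)

theorem stmt_4_general (N : ℕ) (a : ℕ → ℤ → ℂ)
    (M : ℝ)
    (hbound : ∀ (k : ℕ) (ω : ℝ),
      ‖symbol N (a k) (Complex.exp (Complex.I * ω))‖ ≤ M)
    (hsum : Summable fun k : ℕ => ‖(1 / 2) * symbol N (a k) 1 - 1‖) :
    ∃ F : ℝ → ℂ, ∀ s : Set ℝ, IsCompact s →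
      TendstoUniformlyOn
        (fun (K : ℕ) (ω : ℝ) =>
          ∏ k ∈ Finset.range K,
            (1 / 2 : ℂ) * symbol N (a k) (Complex.exp (Complex.I * (ω * (2 : ℝ)^(-(k + 1 : ℤ))))))
        F atTop s := by
  set g : ℕ → ℝ → ℂ := fun k ω ↦
    (1 / 2 : ℂ) * symbol N (a k) (exp (I * (ω * (2 : ℝ) ^ (-(k + 1 : ℤ))))) - 1
  refine ⟨fun ω ↦ ∏' k, (1 + g k ω), fun s hs ↦ ?_⟩
  obtain ⟨R, hR⟩ := hs.isBounded.exists_norm_le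
  set C : ℝ := (2 * N + 1) * (M * (N * R))
  have hM : 0 ≤ M := (norm_nonneg _).trans (hbound 0 0)
  have hg_le : ∀ k, ∀ ω ∈ s, ‖g k ω‖ ≤ C * (1 / 2) ^ k + ‖(1 / 2) * symbol N (a k) 1 - 1‖ := by
    intro k ω hω
    have h := norm_half_symbol_exp_I_mul_sub_one_le N (a k) (hbound k) (ω * 2 ^ (-(k + 1 : ℤ)))
    push_cast at h
    refine h.trans (add_le_add_left ?_ _)
    calc _ ≤ (2 * N + 1) * (M * (N * (R * (1 / 2) ^ k))) := by
          gcongr; exact abs_mul_two_zpow_neg_succ_le (hR ω hω) k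
      _ = C * (1 / 2) ^ k := by ring
  have hg_cont : ∀ k, Continuous (g k) := fun k ↦
    (continuous_symbol_exp N (a k) (by fun_prop)).const_mul _ |>.sub continuous_const
  have hprod := (((summable_geometric_two.mul_left C).add hsum).hasProdUniformlyOn_nat_one_add hs
    (Eventually.of_forall hg_le) fun k ↦ (hg_cont k).continuousOn).tendstoUniformlyOn_finsetRange
  simpa [g] using hprod

/-- Given masks `a^{[k]}` supported in `|j| < N`, with symbols uniformly bounded on the
unit circle, and with `∑_k |½ a^{[k]}(1) - 1| < ∞`, the partial products
`P_K(ω) = ∏_{k=1}^K ½ a^{[k-1]}(e^{iω 2^{-k}})` converge uniformly on every compact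
subset of `ℝ`. -/
theorem stmt_4 (N : ℕ) (hN : 0 < N) (a : ℕ → ℤ → ℂ)
    (hsupp : ∀ (k : ℕ) (j : ℤ), (N : ℤ) ≤ |j| → a k j = 0)
    (M : ℝ) (hM : 0 < M)
    (hbound : ∀ (k : ℕ) (ω : ℝ),
      ‖symbol N (a k) (Complex.exp (Complex.I * ω))‖ ≤ M)
    (hsum : Summable fun k : ℕ => ‖(1 / 2) * symbol N (a k) 1 - 1‖) :
    ∃ F : ℝ → ℂ, ∀ s : Set ℝ, IsCompact s →
      TendstoUniformlyOn
        (fun (K : ℕ) (ω : ℝ) =>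
          ∏ k ∈ Finset.range K,
            (1 / 2 : ℂ) * symbol N (a k) (Complex.exp (Complex.I * (ω * (2 : ℝ)^(-(k + 1 : ℤ))))))
        F atTop s :=
  stmt_4_general N a M hbound hsum
end

section
/- Let a^{[k]}_j, j ∈ ℤ, k ∈ ℕ₀, be finitely supported complex masks with symbols a^{[k]}(z) = ∑_j a^{[k]}_j z^j, let λ ∈ ℂ and μ ≥ 1 an integer. Then the functions f_r(x) = x^r e^{λx} are reproduced stepwise (i.e., at every level k) for all r = 0,...,μ-1 if and only if for all k ∈ ℕ₀: a^{[k]}(-exp(-2^{-(k+1)}λ)) = 0, a^{[k]}(exp(-2^{-(k+1)}λ)) = 2, and (d^r/dz^r) a^{[k]}(exp(-2^{-(k+1)}λ)) = 0 and (d^r/dz^r) a^{[k]}(-exp(-2^{-(k+1)}λ)) = 0 for r = 1,...,μ-1. -/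
/-!
Fix a level `k` and put `w = exp(-λ/2^(k+1))`, `b m = a^{[k]}_m w^m`. Substituting `m = j - 2l`,
reproduction of `x^r e^{λx}` at `j/2^(k+1)` becomes `∑_{m ≡ j (2)} b m (j - m)^r = j^r`.
Since the shifted powers `(j - X)^r`, `r < μ`, span the polynomials of degree `< μ`, asking this
for all `r < μ` says that on each parity class the weights `b` act on these polynomials as
evaluation at `0`; testing against falling factorials instead gives
`∑_{m ≡ ε (2)} b m · m(m-1)⋯(m-s+1) = δ_{s0}`. Finally
`z^s a^{(s)}(z) = ∑ a_m m(m-1)⋯(m-s+1) z^m`, so at `z = ±w` these falling-factorial moments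
of the two parity classes appear as their sum and difference.
-/

open Polynomial Finset Function

theorem Nat.forall_lt_add_one_iff {p : ℕ → Prop} {n : ℕ} :
    (∀ s < n + 1, p s) ↔ p 0 ∧ ∀ s, 1 ≤ s → s ≤ n → p s :=
  ⟨fun h => ⟨h 0 (by omega), fun s _ hs => h s (by omega)⟩, fun ⟨h0, h⟩ s hs =>
    s.eq_zero_or_pos.elim (fun e => e ▸ h0) fun hpos => h s hpos (by omega)⟩

theorem eq_and_eq_iff_add_and_sub {K : Type*} [Field K] [NeZero (2 : K)] {x y d : K} :
    x = d ∧ y = d ↔ x + y = 2 * d ∧ x - y = 0 := by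
  have h2 : (2 : K) ≠ 0 := two_ne_zero
  constructor
  · rintro ⟨rfl, rfl⟩; constructor <;> ring
  · rintro ⟨hs, hd⟩
    exact ⟨mul_left_cancel₀ h2 (by linear_combination hs + hd),
      mul_left_cancel₀ h2 (by linear_combination hs - hd)⟩

theorem Int.forall_emod_two_iff {p : ℤ → Prop} : (∀ j : ℤ, p (j % 2)) ↔ p 0 ∧ p 1 :=
  ⟨fun h => ⟨h 0, h 1⟩, fun h j => (Int.emod_two_eq j).elim (· ▸ h.1) (· ▸ h.2)⟩

namespace Polynomial.Sequence

noncomputable def xPow (R : Type*) [Semiring R] [Nontrivial R] : Sequence R where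
  elems' i := X ^ i
  degree_eq' := degree_X_pow

noncomputable def fallingFactorial (R : Type*) [Ring R] [Nontrivial R] [NoZeroDivisors R] :
    Sequence R where
  elems' i := descPochhammer R i
  degree_eq' i := by
    rw [degree_eq_natDegree (monic_descPochhammer R i).ne_zero, descPochhammer_natDegree]

theorem eqOn_degreeLT_iff {R M : Type*} [Ring R] [AddCommGroup M] [Module R M] (S : Sequence R)
    {n : ℕ} (hS : ∀ i < n, IsUnit (S i).leadingCoeff) {f g : R[X] →ₗ[R] M} :
    Set.EqOn f g (degreeLT R n) ↔ ∀ i < n, f (S i) = g (S i) := by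
  rw [← S.span_degreeLT hS, LinearMap.eqOn_span_iff]
  simp [Set.EqOn]

end Polynomial.Sequence

theorem Polynomial.comp_C_sub_X_mem_degreeLT {R : Type*} [Ring R] {n : ℕ} (x : R) {p : R[X]}
    (hp : p ∈ degreeLT R n) : p.comp (C x - X) ∈ degreeLT R n := by
  rcases eq_or_ne p 0 with rfl | hp0
  · simp
  rw [mem_degreeLT, ← natDegree_lt_iff_degree_lt hp0] at hp
  have hq : (C x - X).natDegree ≤ 1 := (natDegree_sub_le _ _).trans (by simp [natDegree_X_le])
  refine mem_degreeLT.2 (degree_le_natDegree.trans_lt ?_)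
  exact_mod_cast (natDegree_comp_le.trans (mul_le_of_le_one_right (Nat.zero_le _) hq)).trans_lt hp

section Weights

variable {R : Type*} [CommRing R] (G : Finset ℤ) (c : ℤ → R) (n : ℕ)

theorem forall_degreeLT_sum_eval_sub_iff (x : R) :
    (∀ p ∈ degreeLT R n, ∑ m ∈ G, c m * p.eval (x - m) = p.eval x) ↔
      ∀ p ∈ degreeLT R n, ∑ m ∈ G, c m * p.eval (m : R) = p.eval 0 := by
  constructor <;> intro h p hp <;> simpa using h _ (comp_C_sub_X_mem_degreeLT x hp)

theorem forall_degreeLT_sum_eval_sub_iff_pow [Nontrivial R] (x : R) :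
    (∀ p ∈ degreeLT R n, ∑ m ∈ G, c m * p.eval (x - m) = p.eval x) ↔
      ∀ r < n, ∑ m ∈ G, c m * (x - m) ^ r = x ^ r := by
  have := (Sequence.xPow R).eqOn_degreeLT_iff (n := n) (by simp [Sequence.xPow])
    (f := ∑ m ∈ G, c m • leval (x - m)) (g := leval x)
  simpa [Set.EqOn, Sequence.xPow, LinearMap.sum_apply] using this

theorem forall_degreeLT_sum_eval_iff_descPochhammer [IsDomain R] :
    (∀ p ∈ degreeLT R n, ∑ m ∈ G, c m * p.eval (m : R) = p.eval 0) ↔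
      ∀ s < n,
        ∑ m ∈ G, c m * (descPochhammer R s).eval (m : R) = (descPochhammer R s).eval 0 := by
  have := (Sequence.fallingFactorial R).eqOn_degreeLT_iff (n := n)
    (fun i _ => by simp [Sequence.fallingFactorial, (monic_descPochhammer R i).leadingCoeff])
    (f := ∑ m ∈ G, c m • leval (m : R)) (g := leval 0)
  simpa [Set.EqOn, Sequence.fallingFactorial, LinearMap.sum_apply] using this

end Weights

theorem Finset.sum_filter_emod_two_eq_zero_add_eq_one {M : Type*} [AddCommMonoid M]
    (F : Finset ℤ) (f : ℤ → M) :
    ∑ m ∈ F with m % 2 = 0, f m + ∑ m ∈ F with m % 2 = 1, f m = ∑ m ∈ F, f m := by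
  rw [← sum_filter_add_sum_filter_not F (fun m => m % 2 = 0)]
  congr 1
  exact sum_congr (filter_congr fun m _ => by omega) fun _ _ => rfl

theorem Finset.sum_neg_one_zpow_mul {K : Type*} [DivisionRing K] (F : Finset ℤ) (f : ℤ → K) :
    ∑ m ∈ F, (-1 : K) ^ m * f m =
      ∑ m ∈ F with m % 2 = 0, f m - ∑ m ∈ F with m % 2 = 1, f m := by
  rw [← sum_filter_emod_two_eq_zero_add_eq_one, sub_eq_add_neg, ← sum_neg_distrib]
  congr 1 <;> refine sum_congr rfl fun m hm => ?_ <;> have hm := (mem_filter.1 hm).2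
  · rw [Even.neg_one_zpow (Int.even_iff.2 hm), one_mul]
  · rw [Odd.neg_one_zpow (Int.odd_iff.2 hm), neg_one_mul]

theorem tsum_mul_comp_sub_two_mul {α : Type*} [NonUnitalNonAssocSemiring α] [TopologicalSpace α]
    (c g : ℤ → α) {F : Finset ℤ} (hF : support c ⊆ F) (j : ℤ) :
    ∑' l, c (j - 2 * l) * g l = ∑ m ∈ F with m % 2 = j % 2, c m * g ((j - m) / 2) := by
  set h : ℤ → α := fun m => if m % 2 = j % 2 then c m * g ((j - m) / 2) else 0
  have hinj : Injective fun l : ℤ => j - 2 * l := fun l l' hl => by simp only at hl; omega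
  have hsupp : support h ⊆ Set.range fun l : ℤ => j - 2 * l := by
    intro m hm
    have hpar : m % 2 = j % 2 := by by_contra hne; exact hm (if_neg hne)
    exact ⟨(j - m) / 2, by simp only; omega⟩
  calc ∑' l, c (j - 2 * l) * g l = ∑' l, h (j - 2 * l) := by
        congr 1; funext l
        simp only [h]
        rw [show (j - 2 * l) % 2 = j % 2 by omega, if_pos rfl,
          show (j - (j - 2 * l)) / 2 = l by omega]
    _ = ∑' m, h m := hinj.tsum_eq hsupp
    _ = ∑ m ∈ F, h m := tsum_eq_sum fun m hm => by
        simp [h, notMem_support.mp fun hm' => hm (hF hm')]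
    _ = _ := (sum_filter _ _).symm

theorem pow_mul_iteratedDeriv_sum_mul_zpow (c : ℤ → ℂ) (F : Finset ℤ) (s : ℕ) {z : ℂ}
    (hz : z ≠ 0) :
    z ^ s * iteratedDeriv s (fun z => ∑ m ∈ F, c m * z ^ m) z =
      ∑ m ∈ F, c m * (descPochhammer ℂ s).eval (m : ℂ) * z ^ m := by
  have hzpow : ∀ m : ℤ, ContDiffAt ℂ s (fun z : ℂ => c m * z ^ m) z := fun m =>
    contDiffAt_const.mul (((differentiableOn_zpow m {0}ᶜ (Or.inl (by simp))).contDiffOn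
      isOpen_compl_singleton).contDiffAt (isOpen_compl_singleton.mem_nhds hz))
  rw [iteratedDeriv_fun_sum fun m _ => hzpow m, mul_sum]
  refine sum_congr rfl fun m _ => ?_
  rw [iteratedDeriv_const_mul_field, iteratedDeriv_eq_iterate, iter_deriv_zpow,
    descPochhammer_eval_eq_prod_range, zpow_sub₀ hz, zpow_natCast]
  field_simp

theorem exp_mul_pow_reproduction_iff (c : ℤ → ℂ) {F : Finset ℤ} (hF : support c ⊆ F)
    (lam : ℂ) (k r : ℕ) (j : ℤ) :
    ((j : ℂ) / 2 ^ (k + 1)) ^ r * Complex.exp (lam * j / 2 ^ (k + 1)) =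
        ∑' l : ℤ, c (j - 2 * l) * (((l : ℂ) / 2 ^ k) ^ r * Complex.exp (lam * l / 2 ^ k)) ↔
      ∑ m ∈ F with m % 2 = j % 2,
          c m * Complex.exp (-lam / 2 ^ (k + 1)) ^ m * ((j : ℂ) - m) ^ r = (j : ℂ) ^ r := by
  set K := Complex.exp (lam * j / 2 ^ (k + 1)) / 2 ^ ((k + 1) * r)
  have hK : K ≠ 0 := div_ne_zero (Complex.exp_ne_zero _) (pow_ne_zero _ two_ne_zero)
  have hterm : ∀ m ∈ {m ∈ F | m % 2 = j % 2},
      c m * (((((j - m) / 2 : ℤ) : ℂ) / 2 ^ k) ^ r *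
          Complex.exp (lam * (((j - m) / 2 : ℤ) : ℂ) / 2 ^ k)) =
        K * (c m * Complex.exp (-lam / 2 ^ (k + 1)) ^ m * ((j : ℂ) - m) ^ r) := by
    intro m hm
    have hcast : (((j - m) / 2 : ℤ) : ℂ) = ((j : ℂ) - m) / 2 := by
      rw [Int.cast_div (by have := (mem_filter.1 hm).2; omega) two_ne_zero]
      push_cast; rfl
    have harg : lam * (((j : ℂ) - m) / 2) / 2 ^ k =
        lam * j / 2 ^ (k + 1) + m * (-lam / 2 ^ (k + 1)) := by
      rw [pow_succ]; field_simp; ring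
    rw [hcast, harg, Complex.exp_add, Complex.exp_int_mul, div_div, ← pow_succ']
    simp only [K, pow_mul, div_pow]
    field_simp
  rw [tsum_mul_comp_sub_two_mul _ _ hF, sum_congr rfl hterm, ← mul_sum,
    show ((j : ℂ) / 2 ^ (k + 1)) ^ r * Complex.exp (lam * j / 2 ^ (k + 1)) = K * (j : ℂ) ^ r by
      rw [div_pow, ← pow_mul]; ring,
    mul_right_inj' hK, eq_comm]

theorem stepwise_reproduction_iff_symbol (c : ℤ → ℂ) {F : Finset ℤ} (hF : support c ⊆ F)
    (S : ℂ → ℂ) (hS : ∀ z, S z = ∑ m ∈ F, c m * z ^ m) (lam : ℂ) (k n : ℕ) :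
    (∀ r ≤ n, ∀ j : ℤ,
        ((j : ℂ) / 2 ^ (k + 1)) ^ r * Complex.exp (lam * j / 2 ^ (k + 1)) =
          ∑' l : ℤ, c (j - 2 * l) *
            (((l : ℂ) / 2 ^ k) ^ r * Complex.exp (lam * l / 2 ^ k))) ↔
      S (-Complex.exp (-lam / 2 ^ (k + 1))) = 0 ∧ S (Complex.exp (-lam / 2 ^ (k + 1))) = 2 ∧
        ∀ r, 1 ≤ r → r ≤ n →
          iteratedDeriv r S (Complex.exp (-lam / 2 ^ (k + 1))) = 0 ∧
          iteratedDeriv r S (-Complex.exp (-lam / 2 ^ (k + 1))) = 0 := by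
  set w := Complex.exp (-lam / 2 ^ (k + 1))
  have hw : w ≠ 0 := Complex.exp_ne_zero _
  set b : ℤ → ℂ := fun m => c m * w ^ m
  set V : ℤ → ℕ → ℂ := fun ε s =>
    ∑ m ∈ F with m % 2 = ε, b m * (descPochhammer ℂ s).eval (m : ℂ)
  have hderiv_pos : ∀ s, w ^ s * iteratedDeriv s S w = V 0 s + V 1 s := fun s => by
    rw [funext hS, pow_mul_iteratedDeriv_sum_mul_zpow c F s hw,
      ← sum_filter_emod_two_eq_zero_add_eq_one]
    congr 1 <;> exact sum_congr rfl fun m _ => by ring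
  have hderiv_neg : ∀ s, (-w) ^ s * iteratedDeriv s S (-w) = V 0 s - V 1 s := fun s => by
    rw [funext hS, pow_mul_iteratedDeriv_sum_mul_zpow c F s (neg_ne_zero.2 hw),
      ← sum_neg_one_zpow_mul]
    refine sum_congr rfl fun m _ => ?_
    rw [neg_eq_neg_one_mul w, mul_zpow]
    ring
  have hmoments : ∀ j : ℤ, (∀ r < n + 1,
      ∑ m ∈ F with m % 2 = j % 2, b m * ((j : ℂ) - m) ^ r = (j : ℂ) ^ r) ↔
        ∀ s < n + 1, V (j % 2) s = (descPochhammer ℂ s).eval 0 := fun j => by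
    rw [← forall_degreeLT_sum_eval_sub_iff_pow, forall_degreeLT_sum_eval_sub_iff,
      forall_degreeLT_sum_eval_iff_descPochhammer]
  calc _ ↔ ∀ j : ℤ, ∀ s < n + 1, V (j % 2) s = (descPochhammer ℂ s).eval 0 := by
        simp only [exp_mul_pow_reproduction_iff c hF, ← hmoments]
        exact ⟨fun h j r hr => h r (by omega) j, fun h r hr j => h j r (by omega)⟩
    _ ↔ _ := by
      rw [Int.forall_emod_two_iff
        (p := fun ε => ∀ s < n + 1, V ε s = (descPochhammer ℂ s).eval 0), ← forall₂_and,
        Nat.forall_lt_add_one_iff, ← and_assoc, and_comm (a := S (-w) = 0)]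
      refine and_congr ?_ (forall₃_congr fun s hs _ => ?_)
      · rw [eq_and_eq_iff_add_and_sub, ← hderiv_pos, ← hderiv_neg]
        simp
      · rw [eq_and_eq_iff_add_and_sub, ← hderiv_pos, ← hderiv_neg,
          descPochhammer_ne_zero_eval_zero (R := ℂ) (n := s) (by omega)]
        simp [hw]

theorem stmt_7_general (a : ℕ → ℤ → ℂ) (hfin : ∀ k : ℕ, (Function.support (a k)).Finite)
    (S : ℕ → ℂ → ℂ) (hS : ∀ (k : ℕ) (z : ℂ), S k z = ∑' j : ℤ, a k j * z ^ j)
    (lam : ℂ) (μ : ℕ) :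
    (∀ r : ℕ, r ≤ μ - 1 →
      ∀ (k : ℕ) (j : ℤ),
        ((j : ℂ) / 2 ^ (k + 1)) ^ r * Complex.exp (lam * j / 2 ^ (k + 1))
          = ∑' l : ℤ, a k (j - 2 * l) * (((l : ℂ) / 2 ^ k) ^ r * Complex.exp (lam * l / 2 ^ k)))
    ↔ (∀ k : ℕ,
        S k (-Complex.exp (-lam / 2 ^ (k + 1))) = 0 ∧
        S k (Complex.exp (-lam / 2 ^ (k + 1))) = 2 ∧
        ∀ r : ℕ, 1 ≤ r → r ≤ μ - 1 →
          iteratedDeriv r (S k) (Complex.exp (-lam / 2 ^ (k + 1))) = 0 ∧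
          iteratedDeriv r (S k) (-Complex.exp (-lam / 2 ^ (k + 1))) = 0) := by
  have hsupp : ∀ k, support (a k) ⊆ (hfin k).toFinset := fun k => (hfin k).coe_toFinset.superset
  have hlevel := fun k => stepwise_reproduction_iff_symbol (a k) (hsupp k) (S k)
    (fun z => (hS k z).trans (tsum_eq_sum' ((support_mul_subset_left _ _).trans (hsupp k)))) lam k
    (μ - 1)
  exact ⟨fun h k => (hlevel k).1 fun r hr j => h r hr k j,
    fun h r hr k j => (hlevel k).2 (h k) r hr j⟩

/-- Theorem on reproduction of `x^r e^{λx}`, `r = 0,…,μ-1`, by a non-stationary scheme: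
this happens stepwise if and only if the symbols `a^{[k]}` satisfy
`a^{[k]}(-e^{-2^{-(k+1)}λ}) = 0`, `a^{[k]}(e^{-2^{-(k+1)}λ}) = 2`, and all derivatives
of order `1,…,μ-1` of `a^{[k]}` vanish at `±e^{-2^{-(k+1)}λ}`, for all `k`. -/
theorem stmt_7 (a : ℕ → ℤ → ℂ) (hfin : ∀ k : ℕ, (Function.support (a k)).Finite)
    (S : ℕ → ℂ → ℂ) (hS : ∀ (k : ℕ) (z : ℂ), S k z = ∑' j : ℤ, a k j * z ^ j)
    (lam : ℂ) (μ : ℕ) (hμ : 1 ≤ μ) :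
    (∀ r : ℕ, r ≤ μ - 1 →
      ∀ (k : ℕ) (j : ℤ),
        ((j : ℂ) / 2 ^ (k + 1)) ^ r * Complex.exp (lam * j / 2 ^ (k + 1))
          = ∑' l : ℤ, a k (j - 2 * l) * (((l : ℂ) / 2 ^ k) ^ r * Complex.exp (lam * l / 2 ^ k)))
    ↔ (∀ k : ℕ,
        S k (-Complex.exp (-lam / 2 ^ (k + 1))) = 0 ∧
        S k (Complex.exp (-lam / 2 ^ (k + 1))) = 2 ∧
        ∀ r : ℕ, 1 ≤ r → r ≤ μ - 1 →
          iteratedDeriv r (S k) (Complex.exp (-lam / 2 ^ (k + 1))) = 0 ∧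
          iteratedDeriv r (S k) (-Complex.exp (-lam / 2 ^ (k + 1))) = 0) :=
  stmt_7_general a hfin S hS lam μ
end

section
/- Let b^{[k]}, k ∈ ℕ₀, and b be Laurent polynomials (finitely supported ∑_j c_j z^j with complex coefficients) such that there exist constants B > 0 and δ > 0 with |b^{[k]}(e^{iω}) - b(e^{iω})| ≤ B·2^{-k} for all k ∈ ℕ₀ and ω ∈ ℝ, and |b(e^{iω})| ≥ δ for all ω ∈ ℝ. Then there exists a constant M > 0 such that for every m ∈ ℕ₀, every K ≥ 1 and every ω ∈ ℝ the partial products satisfy ∏_{k=1}^{K} |b^{[m+k-1]}(e^{iω·2^{-k}}) / b(e^{iω·2^{-k}})| ≤ M. -/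
/-!
Since `b^{[m+k]}` is within `B 2^{-(m+k)} ≤ B 2^{-k}` of `b` and `|b| ≥ δ`, the `k`-th factor is
at most `1 + (B/δ) 2^{-k}`. Using `1 + x ≤ eˣ`, every partial product is then bounded by
`exp (∑ₖ (B/δ) 2^{-k}) ≤ exp (2B/δ)`.
-/

open Finset

theorem norm_div_norm_le_one_add_of_norm_sub_le {E : Type*} [SeminormedAddCommGroup E]
    {x y : E} {ε δ : ℝ} (hδ : 0 < δ) (hy : δ ≤ ‖y‖) (hxy : ‖x - y‖ ≤ ε) :
    ‖x‖ / ‖y‖ ≤ 1 + ε / δ := by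
  have hy₀ : 0 < ‖y‖ := hδ.trans_le hy
  have hε : 0 ≤ ε := (norm_nonneg _).trans hxy
  calc ‖x‖ / ‖y‖ ≤ (‖y‖ + ε) / ‖y‖ := by
        gcongr
        exact (norm_le_norm_add_norm_sub' x y).trans (by linarith)
    _ = 1 + ε / ‖y‖ := by rw [add_div, div_self hy₀.ne']
    _ ≤ 1 + ε / δ := by gcongr

theorem prod_range_le_exp_of_le_one_add_geometric {a : ℕ → ℝ} {C r : ℝ}
    (ha₀ : ∀ k, 0 ≤ a k) (hC : 0 ≤ C) (hr₀ : 0 ≤ r) (hr₁ : r < 1)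
    (ha : ∀ k, a k ≤ 1 + C * r ^ k) (K : ℕ) :
    ∏ k ∈ range K, a k ≤ Real.exp (C / (1 - r)) := by
  have hgeom : ∑ k ∈ range K, r ^ k ≤ 1 / (1 - r) := by
    simpa using geom_sum_Ico_le_of_lt_one (m := 0) (n := K) hr₀ hr₁
  calc ∏ k ∈ range K, a k ≤ ∏ k ∈ range K, (1 + C * r ^ k) :=
        prod_le_prod (fun k _ ↦ ha₀ k) (fun k _ ↦ ha k)
    _ ≤ Real.exp (∑ k ∈ range K, C * r ^ k) :=
        Real.prod_one_add_le_exp_sum _ fun k ↦ by positivity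
    _ ≤ Real.exp (C / (1 - r)) := by
        rw [Real.exp_le_exp, ← mul_sum, ← mul_one_div C]
        exact mul_le_mul_of_nonneg_left hgeom hC

theorem stmt_9_general
    (Bf : ℕ → ℝ → ℂ) (bf : ℝ → ℂ)
    (B : ℝ) (hB : 0 < B)
    (hclose : ∀ (k : ℕ) (ω : ℝ), ‖Bf k ω - bf ω‖ ≤ B / 2 ^ k)
    (δ : ℝ) (hδ : 0 < δ) (hlow : ∀ ω : ℝ, δ ≤ ‖bf ω‖) :
    ∃ M : ℝ, 0 < M ∧ ∀ (m : ℕ) (K : ℕ), 1 ≤ K → ∀ ω : ℝ,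
      (∏ k ∈ Finset.range K,
        ‖Bf (m + k) (ω / 2 ^ (k + 1))‖ / ‖bf (ω / 2 ^ (k + 1))‖) ≤ M := by
  refine ⟨Real.exp (B / δ / (1 - 1 / 2)), Real.exp_pos _, fun m K _ ω ↦ ?_⟩
  have hshift : ∀ k ω', ‖Bf (m + k) ω' - bf ω'‖ ≤ B * (1 / 2) ^ k := fun k ω' ↦
    calc ‖Bf (m + k) ω' - bf ω'‖ ≤ B / 2 ^ (m + k) := hclose _ _
      _ ≤ B / 2 ^ k := by gcongr <;> simp
      _ = B * (1 / 2) ^ k := by rw [one_div_pow, div_eq_mul_one_div]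
  refine prod_range_le_exp_of_le_one_add_geometric (fun k ↦ by positivity) (by positivity)
    (by norm_num) (by norm_num) (fun k ↦ ?_) K
  calc _ ≤ 1 + B * (1 / 2) ^ k / δ :=
        norm_div_norm_le_one_add_of_norm_sub_le hδ (hlow _) (hshift _ _)
    _ = 1 + B / δ * (1 / 2) ^ k := by ring

/-- If the Laurent polynomials `b^{[k]}` converge to the Laurent polynomial `b` on the
unit circle at rate `B·2^{-k}` and `|b| ≥ δ > 0` on the circle, then all partial products
`∏_{k=1}^K |b^{[m+k-1]}(e^{iω2^{-k}})/b(e^{iω2^{-k}})|` are bounded by a constant `M`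
independent of `m`, `K` and `ω`. -/
theorem stmt_9 (cb : ℕ → ℤ → ℂ) (c : ℤ → ℂ)
    (hfinb : ∀ k : ℕ, (Function.support (cb k)).Finite)
    (hfinc : (Function.support c).Finite)
    (Bf : ℕ → ℝ → ℂ) (bf : ℝ → ℂ)
    (hBf : ∀ (k : ℕ) (ω : ℝ), Bf k ω = ∑' j : ℤ, cb k j * Complex.exp (Complex.I * j * ω))
    (hbf : ∀ ω : ℝ, bf ω = ∑' j : ℤ, c j * Complex.exp (Complex.I * j * ω))
    (B : ℝ) (hB : 0 < B)
    (hclose : ∀ (k : ℕ) (ω : ℝ), ‖Bf k ω - bf ω‖ ≤ B / 2 ^ k)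
    (δ : ℝ) (hδ : 0 < δ) (hlow : ∀ ω : ℝ, δ ≤ ‖bf ω‖) :
    ∃ M : ℝ, 0 < M ∧ ∀ (m : ℕ) (K : ℕ), 1 ≤ K → ∀ ω : ℝ,
      (∏ k ∈ Finset.range K,
        ‖Bf (m + k) (ω / 2 ^ (k + 1))‖ / ‖bf (ω / 2 ^ (k + 1))‖) ≤ M :=
  stmt_9_general Bf bf B hB hclose δ hδ hlow
end

section
/- Let f : ℝ → ℂ be continuous with compact support and define g(t) = ∫_{t-1}^{t} f(s) ds (the convolution of f with the indicator function of [0,1]). If g is differentiable and its derivative g' is a Lipschitz function of order α for some α ∈ (0,1] (i.e., |g'(x) - g'(y)| ≤ L|x-y|^α for some L > 0 and all x,y), then f is a Lipschitz function of order α. -/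
/-!
Differentiating `g` gives `g' t = f t - f (t - 1)`. Since `f` vanishes to the right of its support,
telescoping gives `f x = -∑_{k<N} g' (x + k + 1)` with one `N` valid for every `x` at distance
less than `1` from the support; so for `|x - y| < 1` the Hölder bound of `g'` passes to `f` with
constant `N L`, while for `|x - y| ≥ 1` the boundedness of `f` suffices.
-/

open intervalIntegral Finset Set Function

section
variable {E : Type*} [NormedAddCommGroup E]

theorem Continuous.hasDerivAt_integral_sub_one [NormedSpace ℝ E] [CompleteSpace E] {f : ℝ → E}
    (hf : Continuous f) (t : ℝ) :
    HasDerivAt (fun u => ∫ s in (u - 1)..u, f s) (f t - f (t - 1)) t := by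
  have hsplit : (fun u => ∫ s in (u - 1)..u, f s) =
      fun u => (∫ s in (0 : ℝ)..u, f s) - ∫ s in (0 : ℝ)..(u - 1), f s :=
    funext fun u =>
      (integral_interval_sub_left (hf.intervalIntegrable _ _) (hf.intervalIntegrable _ _)).symm
  rw [hsplit]
  exact (hf.integral_hasStrictDerivAt 0 t).hasDerivAt.sub
    ((hf.integral_hasStrictDerivAt 0 (t - 1)).hasDerivAt.comp_sub_const t 1)

theorem sub_eq_sum_range_sub_shift (f : ℝ → E) (x : ℝ) (N : ℕ) :
    f (x + N) - f x = ∑ k ∈ range N, (f (x + k + 1) - f (x + k)) := by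
  simpa [add_assoc] using (sum_range_sub (fun k : ℕ => f (x + k)) N).symm

theorem norm_sub_le_of_holder_sub_shift {f : ℝ → E} {L α : ℝ}
    (hd : ∀ u v, ‖f u - f (u - 1) - (f v - f (v - 1))‖ ≤ L * |u - v| ^ α)
    {N : ℕ} {x y : ℝ} (hx : f (x + N) = 0) (hy : f (y + N) = 0) :
    ‖f x - f y‖ ≤ N * (L * |x - y| ^ α) := by
  have hsum : f x - f y = ∑ k ∈ range N,
      (f (y + k + 1) - f (y + k + 1 - 1) - (f (x + k + 1) - f (x + k + 1 - 1))) := by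
    simp only [add_sub_cancel_right]
    rw [sum_sub_distrib, ← sub_eq_sum_range_sub_shift, ← sub_eq_sum_range_sub_shift, hx, hy]
    abel
  rw [hsum]
  calc _ ≤ ∑ _k ∈ range N, L * |x - y| ^ α := norm_sum_le_of_le _ fun k _ => by
        simpa [abs_sub_comm] using hd (y + k + 1) (x + k + 1)
    _ = N * (L * |x - y| ^ α) := by simp

theorem norm_sub_le_of_bounded_of_forall_dist_lt_one {f : ℝ → E} {C K α : ℝ}
    (hC : ∀ x, ‖f x‖ ≤ C) (hK : 0 ≤ K) (hα : 0 ≤ α)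
    (hloc : ∀ x y, |x - y| < 1 → ‖f x - f y‖ ≤ K * |x - y| ^ α) (x y : ℝ) :
    ‖f x - f y‖ ≤ (K + 2 * C) * |x - y| ^ α := by
  have hC0 : 0 ≤ C := (norm_nonneg _).trans (hC 0)
  rcases lt_or_ge |x - y| 1 with hnear | hfar
  · exact (hloc x y hnear).trans (by gcongr; linarith)
  · have hpow : 1 ≤ |x - y| ^ α := Real.one_le_rpow hfar hα
    calc ‖f x - f y‖ ≤ ‖f x‖ + ‖f y‖ := norm_sub_le _ _
      _ ≤ 2 * C := by linarith [hC x, hC y]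
      _ ≤ (K + 2 * C) * |x - y| ^ α := by nlinarith

theorem norm_sub_le_of_support_subset_Icc {f : ℝ → E} {a b L α : ℝ}
    (hsupp : support f ⊆ Icc a b) (hL : 0 ≤ L)
    (hd : ∀ u v, ‖f u - f (u - 1) - (f v - f (v - 1))‖ ≤ L * |u - v| ^ α)
    {x y : ℝ} (hxy : |x - y| < 1) :
    ‖f x - f y‖ ≤ ((⌈b - a⌉₊ + 1 : ℕ) : ℝ) * L * |x - y| ^ α := by
  have hvanish : ∀ z, a - 1 < z → f (z + (⌈b - a⌉₊ + 1 : ℕ)) = 0 := fun z hz =>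
    notMem_support.mp fun hmem => by
      have hle := (hsupp hmem).2
      push_cast at hle
      linarith [Nat.le_ceil (b - a)]
  have hxy' := abs_lt.mp hxy
  by_cases hnear : a - 1 < x ∧ a - 1 < y
  · rw [mul_assoc]
    exact norm_sub_le_of_holder_sub_shift hd (hvanish x hnear.1) (hvanish y hnear.2)
  · have hx : f x = 0 := notMem_support.mp fun hmem =>
      hnear (by constructor <;> linarith [(hsupp hmem).1])
    have hy : f y = 0 := notMem_support.mp fun hmem =>
      hnear (by constructor <;> linarith [(hsupp hmem).1])
    simp only [hx, hy, sub_zero, norm_zero]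
    positivity

end

theorem stmt_10_general (f : ℝ → ℂ) (hf : Continuous f) (hcs : HasCompactSupport f)
    (g : ℝ → ℂ) (hg : ∀ t : ℝ, g t = ∫ s in (t - 1)..t, f s)
    (α : ℝ) (hα0 : 0 < α)
    (L : ℝ) (hL : 0 < L)
    (hHolder : ∀ x y : ℝ, ‖deriv g x - deriv g y‖ ≤ L * |x - y| ^ α) :
    ∃ L' : ℝ, 0 < L' ∧ ∀ x y : ℝ, ‖f x - f y‖ ≤ L' * |x - y| ^ α := by
  obtain ⟨C, hC⟩ := hcs.exists_bound_of_continuous hf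
  obtain ⟨a, ha⟩ := hcs.isCompact.bddBelow
  obtain ⟨b, hb⟩ := hcs.isCompact.bddAbove
  have hsupp : support f ⊆ Icc a b := fun x hx =>
    ⟨ha (subset_tsupport f hx), hb (subset_tsupport f hx)⟩
  have hderiv : ∀ t, deriv g t = f t - f (t - 1) := fun t => by
    rw [funext hg]
    exact (hf.hasDerivAt_integral_sub_one t).deriv
  simp only [hderiv] at hHolder
  have hC0 : 0 ≤ C := (norm_nonneg _).trans (hC 0)
  have hNL : 0 < ((⌈b - a⌉₊ + 1 : ℕ) : ℝ) * L := mul_pos (by positivity) hL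
  exact ⟨_, by linarith, norm_sub_le_of_bounded_of_forall_dist_lt_one hC hNL.le hα0.le
    fun x y => norm_sub_le_of_support_subset_Icc hsupp hL.le hHolder⟩

/-- Let `f : ℝ → ℂ` be continuous with compact support and
`g(t) = ∫_{t-1}^t f(s) ds`. If `g` is differentiable and `g'` is Hölder of order
`α ∈ (0,1]`, then `f` is Hölder of order `α`. -/
theorem stmt_10 (f : ℝ → ℂ) (hf : Continuous f) (hcs : HasCompactSupport f)
    (g : ℝ → ℂ) (hg : ∀ t : ℝ, g t = ∫ s in (t - 1)..t, f s)
    (hdiff : Differentiable ℝ g)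
    (α : ℝ) (hα0 : 0 < α) (hα1 : α ≤ 1)
    (L : ℝ) (hL : 0 < L)
    (hHolder : ∀ x y : ℝ, ‖deriv g x - deriv g y‖ ≤ L * |x - y| ^ α) :
    ∃ L' : ℝ, 0 < L' ∧ ∀ x y : ℝ, ‖f x - f y‖ ≤ L' * |x - y| ^ α :=
  stmt_10_general f hf hcs g hg α hα0 L hL hHolder
end

section
/- Let μ ≥ 1 be an integer, let g : ℝ → ℝ be (μ-1) times continuously differentiable in a neighborhood of a point x₀, and let f = g². If g(x₀) ≠ 0 and f^{(s)}(x₀) = 0 for s = 1,...,μ-1, then g^{(s)}(x₀) = 0 for s = 1,...,μ-1. -/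
/-!
By the Leibniz rule, `(g²)^{(s)} = ∑ (s choose i) g^{(i)} g^{(s-i)}`. If the derivatives of `g`
of orders `1, …, s-1` already vanish, only the terms `i = 0` and `i = s` survive, so
`(g²)^{(s)}(x₀) = 2 g(x₀) g^{(s)}(x₀)`; since `g(x₀) ≠ 0`, induction on `s` finishes the proof.
-/

open Finset

variable {𝕜 𝔸 : Type*} [NontriviallyNormedField 𝕜]

section CommRing

variable [NormedCommRing 𝔸] [NormedAlgebra 𝕜 𝔸]

theorem iteratedDeriv_mul_self_of_iteratedDeriv_eq_zero {g : 𝕜 → 𝔸} {x : 𝕜} {n : ℕ}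
    (hn : 1 ≤ n) (hg : ContDiffAt 𝕜 n g x)
    (hvanish : ∀ i, 1 ≤ i → i < n → iteratedDeriv i g x = 0) :
    iteratedDeriv n (fun y => g y * g y) x = 2 * g x * iteratedDeriv n g x := by
  obtain ⟨k, rfl⟩ := Nat.exists_eq_add_of_le' hn
  have hmiddle : ∀ i ∈ range k, ((k + 1).choose (i + 1) : 𝔸) * iteratedDeriv (i + 1) g x *
      iteratedDeriv (k + 1 - (i + 1)) g x = 0 := fun i hi => by
    rw [hvanish (i + 1) (by omega) (by simpa using hi), mul_zero, zero_mul]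
  rw [iteratedDeriv_fun_mul hg hg, sum_range_succ, sum_range_succ', sum_eq_zero hmiddle]
  simp only [Nat.choose_self, Nat.choose_zero_right, Nat.sub_self, Nat.sub_zero,
    iteratedDeriv_zero, Nat.cast_one]
  ring

end CommRing

variable [NormedField 𝔸] [NormedAlgebra 𝕜 𝔸] [CharZero 𝔸]

theorem iteratedDeriv_eq_zero_of_iteratedDeriv_sq_eq_zero {g : 𝕜 → 𝔸} {x : 𝕜} {m : ℕ}
    (hg : ContDiffAt 𝕜 m g x) (hgx : g x ≠ 0)
    (hsq : ∀ s, 1 ≤ s → s ≤ m → iteratedDeriv s (fun y => g y ^ 2) x = 0) :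
    ∀ s, 1 ≤ s → s ≤ m → iteratedDeriv s g x = 0 := by
  intro s
  induction s using Nat.strong_induction_on with
  | _ s ih =>
    intro hs hsm
    have hleibniz := iteratedDeriv_mul_self_of_iteratedDeriv_eq_zero hs
      (hg.of_le (by exact_mod_cast hsm)) fun i hi his => ih i his hi (his.le.trans hsm)
    simp_rw [← sq, hsq s hs hsm] at hleibniz
    simpa [hgx] using hleibniz.symm

theorem stmt_13_general (μ : ℕ) (g : ℝ → ℝ) (x₀ : ℝ)
    (U : Set ℝ) (hU : U ∈ nhds x₀) (hg : ContDiffOn ℝ ((μ - 1 : ℕ) : ℕ∞) g U)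
    (f : ℝ → ℝ) (hf : f = fun x => (g x) ^ 2)
    (hg0 : g x₀ ≠ 0)
    (hfder : ∀ s : ℕ, 1 ≤ s → s ≤ μ - 1 → iteratedDeriv s f x₀ = 0) :
    ∀ s : ℕ, 1 ≤ s → s ≤ μ - 1 → iteratedDeriv s g x₀ = 0 := by
  subst hf
  exact iteratedDeriv_eq_zero_of_iteratedDeriv_sq_eq_zero (hg.contDiffAt hU) hg0 hfder

/-- If `g` is `(μ-1)` times continuously differentiable in a neighborhood of `x₀`,
`f = g²`, `g(x₀) ≠ 0` and `f^{(s)}(x₀) = 0` for `s = 1,…,μ-1`, then `g^{(s)}(x₀) = 0`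
for `s = 1,…,μ-1`. -/
theorem stmt_13 (μ : ℕ) (hμ : 1 ≤ μ) (g : ℝ → ℝ) (x₀ : ℝ)
    (U : Set ℝ) (hU : U ∈ nhds x₀) (hg : ContDiffOn ℝ ((μ - 1 : ℕ) : ℕ∞) g U)
    (f : ℝ → ℝ) (hf : f = fun x => (g x) ^ 2)
    (hg0 : g x₀ ≠ 0)
    (hfder : ∀ s : ℕ, 1 ≤ s → s ≤ μ - 1 → iteratedDeriv s f x₀ = 0) :
    ∀ s : ℕ, 1 ≤ s → s ≤ μ - 1 → iteratedDeriv s g x₀ = 0 :=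
  stmt_13_general μ g x₀ U hU hg f hf hg0 hfder
end

section
/- Let φ : ℝ → ℂ be continuous with compact support and let Φ : ℝ → ℂ be continuous and integrable. Suppose that the Fourier transforms satisfy Φ̂(ω) = |φ̂(ω)|² for all ω ∈ ℝ, and that Φ(j) = δ_{0,j} for all integers j. Then the integer translates of φ form an orthonormal system in L²(ℝ): ∫_{-∞}^{∞} φ(t-k) · conj(φ(t-l)) dt = δ_{k,l} for all k, l ∈ ℤ. -/
/-!
The autocorrelation `A x = ∫ φ t * conj (φ (t - x))` is the convolution of `φ` with
`conj ∘ φ ∘ neg`, so its Fourier transform is `|φ̂|²`, the same as that of `Φ`. Both are continuous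
and integrable, hence equal by Fourier inversion. The inner product of the translates by `k` and
`l` is `A (l - k) = Φ (l - k) = δ_{k,l}`.
-/

open MeasureTheory Convolution FourierTransform ComplexConjugate
open scoped Real

section InnerProductSpace

variable {V : Type*} [NormedAddCommGroup V] [InnerProductSpace ℝ V] [FiniteDimensional ℝ V]
  [MeasurableSpace V] [BorelSpace V]

theorem Continuous.eq_of_fourier_eq {E : Type*} [NormedAddCommGroup E] [NormedSpace ℂ E]
    [CompleteSpace E] {f g : V → E} (hf : Continuous f) (hg : Continuous g)
    (hfi : Integrable f) (hgi : Integrable g) (h : 𝓕 f = 𝓕 g) : f = g := by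
  have hsub : 𝓕 (f - g) = 0 := by
    ext w
    simp only [Real.fourier_eq, Pi.sub_apply, smul_sub]
    rw [integral_sub ((Real.fourierIntegral_convergent_iff w).2 hfi)
      ((Real.fourierIntegral_convergent_iff w).2 hgi)]
    exact sub_eq_zero.2 (congrFun h w)
  have hinv := (hf.sub hg).fourierInv_fourier_eq (hfi.sub hgi)
    (by rw [hsub]; exact integrable_zero _ _ _)
  rw [hsub] at hinv
  refine sub_eq_zero.1 (hinv.symm.trans ?_)
  ext v
  simp [Real.fourierInv_eq]

noncomputable def autocorrelation (φ : V → ℂ) (x : V) : ℂ := ∫ t, φ t * conj (φ (t - x))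

theorem autocorrelation_eq_convolution (φ : V → ℂ) :
    autocorrelation φ = φ ⋆[ContinuousLinearMap.mul ℂ ℂ] fun u => conj (φ (-u)) := by
  ext x
  simp [autocorrelation, convolution_def]

theorem Real.fourier_conj_comp_neg (f : V → ℂ) (w : V) :
    𝓕 (fun x => conj (f (-x))) w = conj (𝓕 f w) := by
  simp only [Real.fourier_eq, ← integral_conj]
  rw [← integral_neg_eq_self]
  congr 1 with v
  simp [Circle.smul_def, ← Circle.coe_inv_eq_conj, ← AddChar.map_neg_eq_inv]

variable {φ : V → ℂ}

theorem MeasureTheory.Integrable.conj_comp_neg (hφ : Integrable φ) :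
    Integrable fun x => conj (φ (-x)) :=
  Complex.conjCLE.toContinuousLinearMap.integrable_comp hφ.comp_neg

theorem Real.fourier_autocorrelation (hφ : Integrable φ) (w : V) :
    𝓕 (autocorrelation φ) w = (‖𝓕 φ w‖ ^ 2 : ℂ) := by
  rw [autocorrelation_eq_convolution, Real.fourier_mul_convolution_eq hφ hφ.conj_comp_neg,
    Real.fourier_conj_comp_neg, Complex.mul_conj, Complex.normSq_eq_norm_sq]
  push_cast
  rfl

theorem MeasureTheory.Integrable.autocorrelation (hφ : Integrable φ) :
    Integrable (autocorrelation φ) := by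
  rw [autocorrelation_eq_convolution]
  exact hφ.integrable_convolution _ hφ.conj_comp_neg

theorem HasCompactSupport.continuous_autocorrelation (hcs : HasCompactSupport φ)
    (hφ : Continuous φ) :
    Continuous (autocorrelation φ) := by
  rw [autocorrelation_eq_convolution]
  exact (hcs.comp_homeomorph (Homeomorph.neg V)).comp_left (g := conj) (map_zero _)
    |>.continuous_convolution_right _ hφ.locallyIntegrable (by fun_prop)

theorem integral_mul_conj_sub_sub (φ : V → ℂ) (a b : V) :
    ∫ t, φ (t - a) * conj (φ (t - b)) = autocorrelation φ (b - a) := by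
  rw [autocorrelation, ← integral_sub_right_eq_self (fun t => φ t * conj (φ (t - (b - a)))) a]
  simp only [sub_sub_sub_cancel_right]

end InnerProductSpace

/-- Mathlib's `𝓕` uses the kernel `exp (-2π i x ξ)`; the paper's uses `exp (-i x ω)`. -/
theorem integral_mul_cexp_eq_fourier (f : ℝ → ℂ) (ω : ℝ) :
    ∫ x, f x * Complex.exp (-Complex.I * x * ω) = 𝓕 f (ω / (2 * π)) := by
  rw [Real.fourier_real_eq]
  congr 1 with x
  rw [Circle.smul_def, Real.fourierChar_apply, smul_eq_mul, mul_comm]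
  congr 2
  push_cast
  field_simp

/-- If `Φ̂(ω) = |φ̂(ω)|²` for all `ω`, where `φ` is continuous with compact support and
`Φ` is continuous and integrable, and `Φ(j) = δ_{0,j}` at the integers, then the integer
translates of `φ` are orthonormal in `L²(ℝ)`. -/
theorem stmt_14 (φ : ℝ → ℂ) (hφc : Continuous φ) (hφcs : HasCompactSupport φ)
    (Φ : ℝ → ℂ) (hΦc : Continuous Φ) (hΦint : Integrable Φ)
    (hFT : ∀ ω : ℝ,
      (∫ x : ℝ, Φ x * Complex.exp (-(Complex.I) * x * ω))
        = ((‖∫ x : ℝ, φ x * Complex.exp (-(Complex.I) * x * ω)‖) ^ 2 : ℂ))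
    (hinterp : ∀ j : ℤ, Φ (j : ℝ) = if j = 0 then 1 else 0) :
    ∀ k l : ℤ,
      (∫ t : ℝ, φ (t - k) * (starRingEnd ℂ) (φ (t - l)))
        = if k = l then 1 else 0 := by
  have hφint : Integrable φ := hφc.integrable_of_hasCompactSupport hφcs
  have hΦ : Φ = autocorrelation φ := by
    refine hΦc.eq_of_fourier_eq (hφcs.continuous_autocorrelation hφc) hΦint hφint.autocorrelation
      (funext fun ξ => ?_)
    have hξ := hFT (2 * π * ξ)
    rw [integral_mul_cexp_eq_fourier, integral_mul_cexp_eq_fourier,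
      mul_div_cancel_left₀ _ Real.two_pi_pos.ne'] at hξ
    rw [hξ, Real.fourier_autocorrelation hφint]
  intro k l
  rw [integral_mul_conj_sub_sub, ← hΦ, ← Int.cast_sub, hinterp]
  exact if_congr (sub_eq_zero.trans eq_comm) rfl rfl
end

section
/- Let φ ∈ L²(ℝ) be such that the integer translates {φ(·-k)}_{k∈ℤ} form an orthonormal system in L²(ℝ), and let (μ_j)_{j∈ℤ} be a finitely supported sequence of real numbers satisfying ∑_{j∈ℤ} μ_j μ_{j+2l} = 2·δ_{0,l} for all l ∈ ℤ. Define ν_j = (-1)^{j+1} μ_{j-1} and ψ(t) = ∑_{j∈ℤ} ν_j φ(2t-j). Then the integer translates {ψ(·-r)}_{r∈ℤ} form an orthonormal system in L²(ℝ): ∫ ψ(t-r)·conj(ψ(t-s)) dt = δ_{r,s} for all r, s ∈ ℤ. -/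
/-!
Since `ψ(t - r) = ∑_m ν_{m-2r} φ(2t - m)` and the functions `φ(2t - m)` are orthogonal with
squared norm `1/2`, the inner product of `ψ(· - r)` and `ψ(· - s)` is
`(1/2) ∑_m ν_{m-2r} ν_{m-2s}`. The signs `(-1)^{j+1}` cancel in pairs, so after the shift
`m = j + 2r + 1` this is `(1/2) ∑_j μ_j μ_{j+2(r-s)} = δ_{r,s}`.
-/

open MeasureTheory ComplexConjugate

theorem MeasureTheory.MemLp.comp_mul_left_sub {E : Type*} [NormedAddCommGroup E] {f : ℝ → E}
    {p : ENNReal} (hf : MemLp f p volume) {a : ℝ} (ha : a ≠ 0) (c : ℝ) :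
    MemLp (fun t => f (a * t - c)) p volume := by
  have hmap : Measure.map (fun t : ℝ => a * t - c) volume = ENNReal.ofReal |a⁻¹| • volume := by
    have hcomp : (fun t : ℝ => a * t - c) = (· + -c) ∘ (a * ·) := by
      funext t; simp [sub_eq_add_neg]
    rw [hcomp, ← Measure.map_map (by fun_prop) (by fun_prop), Real.map_volume_mul_left ha,
      Measure.map_smul, map_add_right_eq_self]
  refine MemLp.comp_of_map ?_ (by fun_prop)
  rw [hmap]
  exact hf.smul_measure ENNReal.ofReal_ne_top

theorem MeasureTheory.MemLp.integrable_mul_conj {α 𝕜 : Type*} [MeasurableSpace α] [RCLike 𝕜]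
    {μ : Measure α} {f g : α → 𝕜} (hf : MemLp f 2 μ) (hg : MemLp g 2 μ) :
    Integrable (fun x => f x * conj (g x)) μ :=
  hf.integrable_mul hg.star

theorem integral_comp_mul_sub_mul_conj (φ : ℝ → ℂ) (a c d : ℝ) :
    ∫ t, φ (a * t - c) * conj (φ (a * t - d)) = |a⁻¹| * ∫ t, φ (t - c) * conj (φ (t - d)) := by
  rw [Measure.integral_comp_mul_left (fun u => φ (u - c) * conj (φ (u - d))), Complex.real_smul]

section Sesquilinear

variable {α ι : Type*} [MeasurableSpace α] {μ : Measure α} {e : ι → α → ℂ}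

theorem integral_sum_mul_conj_sum (he : ∀ i j, Integrable (fun x => e i x * conj (e j x)) μ)
    (s : Finset ι) (a b : ι → ℂ) :
    ∫ x, (∑ i ∈ s, a i * e i x) * conj (∑ j ∈ s, b j * e j x) ∂μ
      = ∑ i ∈ s, ∑ j ∈ s, a i * conj (b j) * ∫ x, e i x * conj (e j x) ∂μ := by
  have hexpand : ∀ x, (∑ i ∈ s, a i * e i x) * conj (∑ j ∈ s, b j * e j x)
      = ∑ i ∈ s, ∑ j ∈ s, a i * conj (b j) * (e i x * conj (e j x)) := by
    intro x
    rw [map_sum, Finset.sum_mul_sum]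
    refine Finset.sum_congr rfl fun i _ => Finset.sum_congr rfl fun j _ => ?_
    rw [map_mul]
    ring
  simp_rw [hexpand]
  rw [integral_finsetSum _ fun i _ => integrable_finsetSum _ fun j _ => (he i j).const_mul _]
  refine Finset.sum_congr rfl fun i _ => ?_
  rw [integral_finsetSum _ fun j _ => (he i j).const_mul _]
  simp_rw [integral_const_mul]

theorem integral_tsum_mul_conj_tsum_of_orthogonal [DecidableEq ι] {c : ℂ}
    (he_int : ∀ i j, Integrable (fun x => e i x * conj (e j x)) μ)
    (he : ∀ i j, ∫ x, e i x * conj (e j x) ∂μ = if i = j then c else 0)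
    {a b : ι → ℂ} (ha : (Function.support a).Finite) (hb : (Function.support b).Finite) :
    ∫ x, (∑' i, a i * e i x) * conj (∑' j, b j * e j x) ∂μ = c * ∑' i, a i * conj (b i) := by
  set s := ha.toFinset ∪ hb.toFinset
  have hab_s : ∀ i ∉ s, a i = 0 ∧ b i = 0 := fun i hi => by simpa [s] using hi
  have hsum : ∀ (d : ι → ℂ), (∀ i ∉ s, d i = 0) → ∀ x, ∑' i, d i * e i x = ∑ i ∈ s, d i * e i x :=
    fun d hd x => tsum_eq_sum fun i hi => by simp [hd i hi]
  simp_rw [hsum a fun i hi => (hab_s i hi).1, hsum b fun i hi => (hab_s i hi).2, integral_sum_mul_conj_sum he_int, he]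
  rw [tsum_eq_sum fun i hi => by simp [(hab_s i hi).1], Finset.mul_sum]
  refine Finset.sum_congr rfl fun i hi => ?_
  simp [Finset.sum_ite_eq, hi, mul_comm]

end Sesquilinear

theorem tsum_alternating_flip_mul (μc ν : ℤ → ℝ) (hν : ∀ j : ℤ, ν j = (-1 : ℝ) ^ (j + 1) * μc (j - 1))
    (r s : ℤ) :
    ∑' m : ℤ, ν (m - 2 * r) * ν (m - 2 * s) = ∑' j : ℤ, μc j * μc (j + 2 * (r - s)) := by
  rw [← (Equiv.addRight (2 * r + 1)).tsum_eq]
  refine tsum_congr fun j => ?_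
  have hsign :
      (-1 : ℝ) ^ (j + (2 * r + 1) - 2 * r + 1) * (-1) ^ (j + (2 * r + 1) - 2 * s + 1) = 1 := by
    rw [← zpow_add₀ (by norm_num)]
    exact Even.neg_one_zpow ⟨j + r - s + 2, by ring⟩
  simp only [Equiv.coe_addRight, hν]
  rw [show j + (2 * r + 1) - 2 * r - 1 = j by ring,
    show j + (2 * r + 1) - 2 * s - 1 = j + 2 * (r - s) by ring]
  linear_combination (μc j * μc (j + 2 * (r - s))) * hsign

/-- If the integer translates of `φ ∈ L²(ℝ)` are orthonormal and the finitely supported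
real coefficients `(μ_j)` satisfy `∑_j μ_j μ_{j+2l} = 2δ_{0,l}`, then the integer
translates of the wavelet `ψ(t) = ∑_j ν_j φ(2t-j)`, `ν_j = (-1)^{j+1} μ_{j-1}`, form an
orthonormal system in `L²(ℝ)`. -/
theorem stmt_16 (φ : ℝ → ℂ) (hφL2 : MemLp φ 2 volume)
    (hφon : ∀ r s : ℤ,
      (∫ t : ℝ, φ (t - r) * (starRingEnd ℂ) (φ (t - s))) = if r = s then 1 else 0)
    (μc : ℤ → ℝ) (hfin : (Function.support μc).Finite)
    (horth : ∀ l : ℤ, (∑' j : ℤ, μc j * μc (j + 2 * l)) = 2 * (if l = 0 then 1 else 0))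
    (ν : ℤ → ℝ) (hν : ∀ j : ℤ, ν j = (-1 : ℝ) ^ (j + 1) * μc (j - 1))
    (ψ : ℝ → ℂ) (hψ : ∀ t : ℝ, ψ t = ∑' j : ℤ, (ν j : ℂ) * φ (2 * t - j)) :
    ∀ r s : ℤ,
      (∫ t : ℝ, ψ (t - r) * (starRingEnd ℂ) (ψ (t - s))) = if r = s then 1 else 0 := by
  intro r s
  have hψ_shift : ∀ (k : ℤ) (t : ℝ), ψ (t - k) = ∑' m : ℤ, (ν (m - 2 * k) : ℂ) * φ (2 * t - m) := by
    intro k t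
    rw [hψ, ← (Equiv.subRight (2 * k)).tsum_eq]
    refine tsum_congr fun m => ?_
    push_cast [Equiv.subRight_apply]
    ring_nf
  have hcoeff_fin : ∀ k : ℤ, (Function.support fun m : ℤ => (ν (m - 2 * k) : ℂ)).Finite :=
    fun k => (hfin.image (· + (2 * k + 1))).subset fun m hm =>
      ⟨m - 2 * k - 1, fun h => hm (by simp [hν, h]), by ring⟩
  have hint : ∀ m n : ℤ, Integrable (fun t => φ (2 * t - m) * conj (φ (2 * t - n))) :=
    fun m n => (hφL2.comp_mul_left_sub two_ne_zero m).integrable_mul_conj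
      (hφL2.comp_mul_left_sub two_ne_zero n)
  have hdilated : ∀ m n : ℤ, ∫ t, φ (2 * t - m) * conj (φ (2 * t - n))
      = if m = n then ((|(2 : ℝ)⁻¹| : ℝ) : ℂ) else 0 := fun m n => by
    rw [integral_comp_mul_sub_mul_conj, hφon]
    split_ifs <;> simp
  simp_rw [hψ_shift]
  rw [integral_tsum_mul_conj_tsum_of_orthogonal hint hdilated (hcoeff_fin r) (hcoeff_fin s)]
  simp_rw [Complex.conj_ofReal, ← Complex.ofReal_mul, ← Complex.ofReal_tsum,
    tsum_alternating_flip_mul μc ν hν, horth, sub_eq_zero]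
  split_ifs <;> norm_num
end
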